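/- Let n ≥ 5 and let a be a real number with 1/3 < a < 1. Set ω_a = (1 | a, (1−a)/2, …, (1−a)/2) ∈ ℝ^{1,n} (one entry a followed by n−1 entries (1−a)/2). Then ω_a is normalized reduced, and ω_a·(−K) > 0 if and only if a > (n−7)/(n−3); when this holds, also ω_a·ω_a > 0. In particular, for 5 ≤ n ≤ 9 one has ω_a·(−K) > 0 for every a ∈ (1/3, 1). (Lemma 2.20: the type 𝔻_{n−1} reduced classes lying in the c₁-positive reduced symplectic cone.) -/

import Mathlib

/-!
Every quantity in the statement is affine or quadratic in `a`, because `ω_a` has only two distinct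
entries: `m₁ + ⋯ + mₙ = a + (n - 1)(1 - a)/2` and `m₁² + ⋯ + mₙ² = a² + (n - 1)((1 - a)/2)²`.
Reducedness is `m₁ + m₂ + m₃ = 1`. The condition `ω_a·(-K) > 0` is the linear inequality
`(n - 7) < a (n - 3)`, and `1 - ω_a·ω_a` factors as `(1 - a)(a (n + 3) - (n - 5))/4`, whose second
factor exceeds `a (n - 3) - (n - 7)` by `6a - 2 > 0`.
-/

open Finset

noncomputable section

/-- The `m`-coefficients of the class `ω_a = (1 | a, (1-a)/2, …, (1-a)/2)`:
one entry `a` followed by `n - 1` entries `(1-a)/2`.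
Here `omegaM n a i` denotes `m_{i+1}`, so `m_1 = a`. -/
def omegaM (n : ℕ) (a : ℝ) : Fin n → ℝ := fun i => if (i : ℕ) = 0 then a else (1 - a) / 2

section

variable {n : ℕ} {a : ℝ}

theorem omegaM_antitone (ha : 1 / 3 ≤ a) : Antitone (omegaM n a) := by
  intro i j hij
  unfold omegaM
  split_ifs with hj hi hi
  · exact le_rfl
  · exact absurd (Fin.le_def.1 hij) (by omega)
  · linarith
  · exact le_rfl

theorem omegaM_nonneg (ha₀ : 0 ≤ a) (ha₁ : a ≤ 1) (i : Fin n) : 0 ≤ omegaM n a i := by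
  unfold omegaM
  split_ifs <;> linarith

theorem omegaM_zero_add_one_add_two (hn : 2 < n) :
    omegaM n a ⟨0, by omega⟩ + omegaM n a ⟨1, by omega⟩ + omegaM n a ⟨2, by omega⟩ = 1 := by
  simp only [omegaM]
  norm_num
  ring

theorem sum_comp_omegaM (hn : 0 < n) (g : ℝ → ℝ) :
    ∑ i, g (omegaM n a i) = g a + ((n : ℝ) - 1) * g ((1 - a) / 2) := by
  obtain ⟨m, rfl⟩ := Nat.exists_eq_add_one_of_ne_zero hn.ne'
  simp [Fin.sum_univ_succ, omegaM]

theorem sum_omegaM (hn : 0 < n) : ∑ i, omegaM n a i = a + ((n : ℝ) - 1) * ((1 - a) / 2) :=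
  sum_comp_omegaM hn id

theorem sum_sq_omegaM (hn : 0 < n) :
    ∑ i, omegaM n a i ^ 2 = a ^ 2 + ((n : ℝ) - 1) * ((1 - a) / 2) ^ 2 :=
  sum_comp_omegaM hn (· ^ 2)

theorem sum_omegaM_lt_three_iff (hn : 3 < n) :
    ∑ i, omegaM n a i < 3 ↔ ((n : ℝ) - 7) / ((n : ℝ) - 3) < a := by
  have hn' : (3 : ℝ) < n := by exact_mod_cast hn
  rw [sum_omegaM (by omega), div_lt_iff₀ (by linarith)]
  constructor <;> intro h <;> linarith

theorem sum_sq_omegaM_lt_one (hn : 3 < n) (ha₁ : 1 / 3 < a) (ha₂ : a < 1)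
    (h : ((n : ℝ) - 7) / ((n : ℝ) - 3) < a) : ∑ i, omegaM n a i ^ 2 < 1 := by
  have hn' : (3 : ℝ) < n := by exact_mod_cast hn
  rw [div_lt_iff₀ (by linarith)] at h
  have key : 0 < a * (n + 3) - (n - 5) := by linarith
  have factor : 1 - (a ^ 2 + ((n : ℝ) - 1) * ((1 - a) / 2) ^ 2) =
      (1 - a) * (a * (n + 3) - (n - 5)) / 4 := by ring
  have : 0 < (1 - a) * (a * (n + 3) - (n - 5)) / 4 := by
    have := sub_pos.2 ha₂
    positivity
  rw [sum_sq_omegaM (by omega)]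
  linarith

theorem sub_seven_div_sub_three_le_third (hn : 3 < n) (hn₉ : n ≤ 9) :
    ((n : ℝ) - 7) / ((n : ℝ) - 3) ≤ 1 / 3 := by
  have hn' : (3 : ℝ) < n := by exact_mod_cast hn
  have hn₉' : (n : ℝ) ≤ 9 := by exact_mod_cast hn₉
  rw [div_le_iff₀ (by linarith)]
  linarith

end

/-- Lemma 2.20: for `n ≥ 5` and `1/3 < a < 1`, the class
`ω_a = (1 | a, (1-a)/2, …, (1-a)/2)` is normalized reduced; it satisfies
`ω_a·(-K) > 0` (i.e. `m_1 + ⋯ + m_n < 3`) iff `a > (n-7)/(n-3)`, in which case it also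
has positive square (`m_1² + ⋯ + m_n² < 1`); and for `5 ≤ n ≤ 9` one always has
`ω_a·(-K) > 0`. -/
theorem type_D_reduced_classes
    (n : ℕ) (hn : 5 ≤ n) (a : ℝ) (ha1 : 1 / 3 < a) (ha2 : a < 1) :
    (Antitone (omegaM n a) ∧ (∀ i, 0 ≤ omegaM n a i) ∧
      omegaM n a ⟨0, by omega⟩ + omegaM n a ⟨1, by omega⟩ + omegaM n a ⟨2, by omega⟩ ≤ 1) ∧
    ((∑ i, omegaM n a i < 3) ↔ ((n : ℝ) - 7) / ((n : ℝ) - 3) < a) ∧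
    (((n : ℝ) - 7) / ((n : ℝ) - 3) < a → ∑ i, (omegaM n a i) ^ 2 < 1) ∧
    (n ≤ 9 → ∑ i, omegaM n a i < 3) := by
  have hn3 : 3 < n := by omega
  refine ⟨⟨omegaM_antitone ha1.le, omegaM_nonneg (by linarith) ha2.le,
    (omegaM_zero_add_one_add_two (by omega)).le⟩, sum_omegaM_lt_three_iff hn3,
    sum_sq_omegaM_lt_one hn3 ha1 ha2, fun hn9 => ?_⟩
  exact (sum_omegaM_lt_three_iff hn3).2
    ((sub_seven_div_sub_three_le_third hn3 hn9).trans_lt ha1)
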